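/- arXiv:1302.1669 — 4 statements merged into one kernel-verified Lean document; each statement's English description precedes it below -/
import Mathlib

section
/- In the refined social poll model, two linear orderings of the agents that induce the same acyclic orientation of the friendship graph G (i.e., orient each edge from the earlier to the later voter identically) produce exactly the same vote for every agent, and hence the same score function. -/
open scoped Classical
open Finset

/-- The set of neighbors of `x` (w.r.t. adjacency `adj`) that vote before `x`
in the voting order `ord` (smaller `ord`-value votes earlier). -/
noncomputable def prior {V : Type*} [Fintype V] (adj : V → V → Prop) (ord : V → ℕ) (x : V) :
    Finset V :=
  Finset.univ.filter fun y => adj x y ∧ ord y < ord x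

/-- Refined social poll model: `f` is the (unique) vote function arising from the
voting order `ord`: an agent `x` votes `c ∈ P x` if strictly more than half of her
previously-voting neighbors voted `c`, and otherwise votes her top choice `p1 x`. -/
def Consistent {V C : Type*} [Fintype V] (adj : V → V → Prop)
    (P : V → Finset C) (p1 : V → C) (ord : V → ℕ) (f : V → C) : Prop :=
  ∀ x : V,
    (∃ c ∈ P x,
        (2 * (((prior adj ord x).filter fun y => f y = c).card) > (prior adj ord x).card)
        ∧ f x = c)
    ∨ ((¬ ∃ c ∈ P x,
          2 * (((prior adj ord x).filter fun y => f y = c).card) > (prior adj ord x).card)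
        ∧ f x = p1 x)

/-- The score of candidate `c`: the number of agents voting for `c`. -/
noncomputable def score {V C : Type*} [Fintype V] (f : V → C) (c : C) : ℕ :=
  (Finset.univ.filter fun x => f x = c).card

/-- Two linear orderings of the agents inducing the same acyclic orientation of the
friendship graph (each edge oriented from the earlier to the later voter identically)
produce exactly the same vote for every agent, and hence the same score function. -/
theorem same_orientation_same_votes_and_scores
    {V C : Type*} [Fintype V] (adj : V → V → Prop) (hsym : Symmetric adj)
    (P : V → Finset C) (p1 : V → C)
    (ord ord' : V → ℕ) (hord : Function.Injective ord) (hord' : Function.Injective ord')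
    (horient : ∀ u v : V, adj u v → (ord u < ord v ↔ ord' u < ord' v))
    (f f' : V → C)
    (hf : Consistent adj P p1 ord f) (hf' : Consistent adj P p1 ord' f') :
    (∀ x : V, f x = f' x) ∧ (∀ c : C, score f c = score f' c) := by
  have key : ∀ n : ℕ, ∀ x : V, ord x = n → f x = f' x := by
    intro n
    induction n using Nat.strong_induction_on with
    | _ n ih =>
      intro x hx
      have hprior : prior adj ord' x = prior adj ord x := by
        ext y
        simp only [prior, Finset.mem_filter, Finset.mem_univ, true_and]
        constructor
        · rintro ⟨ha, hlt⟩
          exact ⟨ha, (horient y x (hsym ha)).mpr hlt⟩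
        · rintro ⟨ha, hlt⟩
          exact ⟨ha, (horient y x (hsym ha)).mp hlt⟩
      have hfy : ∀ y ∈ prior adj ord x, f y = f' y := by
        intro y hy
        simp only [prior, Finset.mem_filter, Finset.mem_univ, true_and] at hy
        exact ih (ord y) (hx ▸ hy.2) y rfl
      have hfilter : ∀ c : C,
          (prior adj ord' x).filter (fun y => f' y = c)
            = (prior adj ord x).filter (fun y => f y = c) := by
        intro c
        rw [hprior]
        exact Finset.filter_congr (fun y hy => by rw [hfy y hy])
      have hcond : ∀ c : C,
          (2 * (((prior adj ord' x).filter fun y => f' y = c).card)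
            > (prior adj ord' x).card)
          ↔ (2 * (((prior adj ord x).filter fun y => f y = c).card)
            > (prior adj ord x).card) := by
        intro c; rw [hfilter, hprior]
      have huniq : ∀ c c' : C,
          2 * (((prior adj ord x).filter fun y => f y = c).card) > (prior adj ord x).card →
          2 * (((prior adj ord x).filter fun y => f y = c').card) > (prior adj ord x).card →
          c = c' := by
        intro c c' h1 h2
        by_contra hne
        have hdisj : Disjoint ((prior adj ord x).filter fun y => f y = c)
            ((prior adj ord x).filter fun y => f y = c') := by
          rw [Finset.disjoint_left]
          intro y hy hy'
          simp only [Finset.mem_filter] at hy hy'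
          exact hne (hy.2.symm.trans hy'.2)
        have hsum := Finset.card_union_of_disjoint hdisj ▸
          Finset.card_le_card (Finset.union_subset (Finset.filter_subset _ _)
            (Finset.filter_subset _ _))
        omega
      rcases hf x with ⟨c, hcP, hmaj, hfx⟩ | ⟨hno, hfx⟩
      · rcases hf' x with ⟨c', hc'P, hmaj', hfx'⟩ | ⟨hno', hfx'⟩
        · rw [hfx, hfx']
          exact huniq c c' hmaj ((hcond c').mp hmaj')
        · exact absurd ⟨c, hcP, (hcond c).mpr hmaj⟩ hno'
      · rcases hf' x with ⟨c', hc'P, hmaj', hfx'⟩ | ⟨hno', hfx'⟩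
        · exact absurd ⟨c', hc'P, (hcond c').mp hmaj'⟩ hno
        · rw [hfx, hfx']
  have hvotes : ∀ x : V, f x = f' x := fun x => key (ord x) x rfl
  refine ⟨hvotes, fun c => ?_⟩
  unfold score
  congr 1
  exact Finset.filter_congr (fun x _ => by rw [hvotes x])
end

section
/- The number q_t of labeled directed acyclic graphs on t vertices satisfies the recurrence q_t = Σ_{k=1}^{t} (-1)^{k-1} · C(t,k) · 2^{k(t-k)} · q_{t-k}, with q_0 = 1. -/
/-- A labeled directed graph on vertex set `Fin t` is acyclic if it has no directed
cycle, i.e. no vertex reaches itself by a nonempty directed walk. -/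
def IsAcyclicRel {t : ℕ} (r : Fin t → Fin t → Bool) : Prop :=
  ∀ x : Fin t, ¬ Relation.TransGen (fun a b => r a b = true) x x

/-- The number of labeled directed acyclic graphs on `t` vertices. -/
noncomputable def numDAGs (t : ℕ) : ℕ :=
  Nat.card {r : Fin t → Fin t → Bool // IsAcyclicRel r}

/-!
Every nonempty DAG has a source, so inclusion–exclusion over the vertices required to be sources
gives `0 = ∑_{S ⊆ V} (-1)^{|S|} N(S)`, where `N(S)` counts the DAGs in which every vertex of `S` is
a source. Such a DAG is an arbitrary set of edges from `S` to `V \ S` together with an arbitrary DAG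
on `V \ S`, so `N(S) = 2^{k(t-k)} q_{t-k}` for `|S| = k`, `|V| = t`; the term `S = ∅` is `q_t`.
-/

open Finset Relation

variable {V W : Type*}

def IsAcyclic (r : V → V → Bool) : Prop :=
  ∀ x, ¬ TransGen (fun a b => r a b = true) x x

def IsSource (r : V → V → Bool) (v : V) : Prop :=
  ∀ a, r a v = false

theorem IsAcyclic.comap {r : V → V → Bool} (h : IsAcyclic r) (f : W → V) :
    IsAcyclic fun a b => r (f a) (f b) :=
  fun x hx => h (f x) (hx.lift f fun _ _ => id)

theorem IsAcyclic.exists_isSource [Finite V] [Nonempty V] {r : V → V → Bool}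
    (h : IsAcyclic r) : ∃ v, IsSource r v := by
  let R := TransGen fun a b : V => r a b = true
  have : Std.Irrefl R := ⟨h⟩
  obtain ⟨v, -, hv⟩ := (Finite.wellFounded_of_trans_of_irrefl R).has_min Set.univ
    ⟨Classical.arbitrary V, trivial⟩
  exact ⟨v, fun a => Bool.eq_false_iff.mpr fun hav => hv a trivial (.single hav)⟩

def acyclicCongr (e : V ≃ W) :
    {r : V → V → Bool // IsAcyclic r} ≃ {r : W → W → Bool // IsAcyclic r} where
  toFun r := ⟨_, r.2.comap e.symm⟩
  invFun r := ⟨_, r.2.comap e⟩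
  left_inv r := by ext; simp
  right_inv r := by ext; simp

theorem card_acyclic [Fintype V] :
    Nat.card {r : V → V → Bool // IsAcyclic r} = numDAGs (Fintype.card V) :=
  Nat.card_congr (acyclicCongr (Fintype.equivFin V))

theorem Relation.TransGen.subtype_mk {p : V → Prop} {R : V → V → Prop}
    (hR : ∀ a b, R a b → p b) {x y : V} (h : TransGen R x y) (hx : p x) (hy : p y) :
    TransGen (fun a b : Subtype p => R a b) ⟨x, hx⟩ ⟨y, hy⟩ := by
  induction h using TransGen.head_induction_on with
  | single hab => exact .single hab
  | head hab _ ih => exact (ih (hR _ _ hab)).head hab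

section Sources

variable [DecidableEq V] (S : Finset V)

def extendBySources (f : S → {v // v ∉ S} → Bool) (d : {v // v ∉ S} → {v // v ∉ S} → Bool) :
    V → V → Bool := fun a b =>
  if hb : b ∈ S then false else if ha : a ∈ S then f ⟨a, ha⟩ ⟨b, hb⟩ else d ⟨a, ha⟩ ⟨b, hb⟩

theorem isAcyclic_extendBySources {f : S → {v // v ∉ S} → Bool}
    {d : {v // v ∉ S} → {v // v ∉ S} → Bool} (hd : IsAcyclic d) :
    IsAcyclic (extendBySources S f d) := by
  have hS : ∀ a b, extendBySources S f d a b = true → b ∉ S := fun a b h hb => by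
    simp [extendBySources, hb] at h
  intro x hx
  obtain ⟨_, -, hlast⟩ := TransGen.tail'_iff.mp hx
  have hxS := hS _ _ hlast
  refine hd ⟨x, hxS⟩ (TransGen.mono ?_ _ _ (hx.subtype_mk hS hxS hxS))
  intro a b hab
  simpa [extendBySources, a.2, b.2] using hab

def acyclicSourcesEquiv :
    {r : V → V → Bool // IsAcyclic r ∧ ∀ v ∈ S, IsSource r v} ≃
      (S → {v // v ∉ S} → Bool) × {d : {v // v ∉ S} → {v // v ∉ S} → Bool // IsAcyclic d} where
  toFun r := (fun a b => r.1 a b, ⟨_, r.2.1.comap Subtype.val⟩)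
  invFun fd := ⟨extendBySources S fd.1 fd.2.1, isAcyclic_extendBySources S fd.2.2,
    fun v hv a => by simp [extendBySources, hv]⟩
  left_inv r := by
    ext a b
    by_cases hb : b ∈ S
    · simp [extendBySources, hb, r.2.2 b hb a]
    · by_cases ha : a ∈ S <;> simp [extendBySources, ha, hb]
  right_inv fd := by ext a b <;> simp [extendBySources, a.2, b.2]

theorem card_acyclic_forall_isSource [Fintype V] :
    Nat.card {r : V → V → Bool // IsAcyclic r ∧ ∀ v ∈ S, IsSource r v} =
      2 ^ (#S * (Fintype.card V - #S)) * numDAGs (Fintype.card V - #S) := by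
  have hSc : Fintype.card {v // v ∉ S} = Fintype.card V - #S := by
    simp [Fintype.card_subtype_compl]
  rw [Nat.card_congr (acyclicSourcesEquiv S), Nat.card_prod, card_acyclic, hSc,
    Nat.card_eq_fintype_card, Fintype.card_fun, Fintype.card_fun, Fintype.card_bool, hSc,
    Fintype.card_coe, ← pow_mul, mul_comm (Fintype.card V - #S)]

end Sources

theorem sum_neg_one_pow_card_mul_card_acyclic_forall_isSource [Fintype V] [Nonempty V] :
    ∑ S : Finset V, (-1 : ℤ) ^ #S *
      Nat.card {r : V → V → Bool // IsAcyclic r ∧ ∀ v ∈ S, IsSource r v} = 0 := by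
  classical
  set sourcesAt : V → Finset {r : V → V → Bool // IsAcyclic r} := fun v => {r | IsSource r.1 v}
  have no_sourceless : univ.inf (fun v => (sourcesAt v)ᶜ) = ∅ := by
    ext r
    simpa [sourcesAt, Finset.mem_inf] using r.2.exists_isSource
  have card_inf (S : Finset V) : #(S.inf sourcesAt) =
      Nat.card {r : V → V → Bool // IsAcyclic r ∧ ∀ v ∈ S, IsSource r v} := by
    rw [← Nat.card_eq_finsetCard]
    exact Nat.card_congr <|
      (Equiv.subtypeEquivRight fun r => by simp [sourcesAt, Finset.mem_inf]).trans
        (Equiv.subtypeSubtypeEquivSubtypeInter _ fun r => ∀ v ∈ S, IsSource r v)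
  have := inclusion_exclusion_card_inf_compl univ sourcesAt
  rw [no_sourceless, card_empty, Nat.cast_zero, powerset_univ] at this
  simpa only [card_inf] using this.symm

theorem sum_range_neg_one_pow_mul_choose_mul_numDAGs {n : ℕ} (hn : 1 ≤ n) :
    ∑ k ∈ range (n + 1), (-1 : ℤ) ^ k * n.choose k * 2 ^ (k * (n - k)) * numDAGs (n - k) = 0 := by
  have : Nonempty (Fin n) := ⟨⟨0, hn⟩⟩
  rw [← sum_neg_one_pow_card_mul_card_acyclic_forall_isSource (V := Fin n), ← powerset_univ]
  simp only [card_acyclic_forall_isSource, Fintype.card_fin]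
  rw [sum_powerset_apply_card
    (fun k => (-1 : ℤ) ^ k * ((2 ^ (k * (n - k)) * numDAGs (n - k) : ℕ) : ℤ)),
    card_univ, Fintype.card_fin]
  refine sum_congr rfl fun k _ => ?_
  push_cast
  ring

theorem numDAGs_zero : numDAGs 0 = 1 := by
  rw [numDAGs, Nat.card_eq_one_iff_unique]
  exact ⟨inferInstance, ⟨⟨fun a => a.elim0, fun a => a.elim0⟩⟩⟩

/-- The number `q_t` of labeled DAGs on `t` vertices satisfies `q_0 = 1` and the
recurrence `q_t = ∑_{k=1}^{t} (-1)^{k-1} C(t,k) 2^{k(t-k)} q_{t-k}`. -/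
theorem numDAGs_recurrence :
    numDAGs 0 = 1 ∧
    ∀ t : ℕ, 1 ≤ t →
      (numDAGs t : ℤ) =
        ∑ k ∈ Finset.Icc 1 t,
          (-1) ^ (k - 1) * (t.choose k : ℤ) * 2 ^ (k * (t - k)) * (numDAGs (t - k) : ℤ) := by
  refine ⟨numDAGs_zero, fun t ht => ?_⟩
  have h := sum_range_neg_one_pow_mul_choose_mul_numDAGs ht
  rw [Nat.range_succ_eq_Icc_zero, ← add_sum_Ioc_eq_sum_Icc t.zero_le,
    ← Icc_add_one_left_eq_Ioc, zero_add, add_eq_zero_iff_eq_neg, ← sum_neg_distrib] at h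
  convert h using 1
  · simp
  · refine sum_congr rfl fun k hk => ?_
    obtain ⟨j, rfl⟩ := Nat.exists_eq_add_one.mpr (mem_Icc.mp hk).1
    rw [Nat.add_sub_cancel, pow_succ]
    ring
end

section
/- Consider three agents 0, 1, 2 forming a path with edges {0,1} and {1,2}, where agent 0 has preferences (c, b) (top choice c, second b), agent 1 has (a, c), and agent 2 has (b, c), in the refined social poll model with majority influence. Then: under the voting order 0 ≺ 1 ≺ 2, agent 2 votes c; and under the voting order 1 ≺ 0 ≺ 2, agent 2 votes b. Moreover, for every voting order, agent 2 votes either b or c. -/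
open scoped Classical
open Finset

/-- Path `0 — 1 — 2` on three agents. -/
def adj3 (x y : Fin 3) : Prop :=
  (x : ℕ) + 1 = (y : ℕ) ∨ (y : ℕ) + 1 = (x : ℕ)

/-- Candidates `Fin 3` with `a = 0`, `b = 1`, `c = 2`.
Preferred sets: agent 0: `{c, b}`; agent 1: `{a, c}`; agent 2: `{b, c}`. -/
def P3 : Fin 3 → Finset (Fin 3) := ![{2, 1}, {0, 2}, {1, 2}]

/-- Top choices: agent 0: `c`; agent 1: `a`; agent 2: `b`. -/
def p13 : Fin 3 → Fin 3 := ![2, 0, 1]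


lemma prior_empty {ord : Fin 3 → ℕ} {x : Fin 3}
    (h : ∀ y, adj3 x y → ¬ ord y < ord x) : prior adj3 ord x = ∅ := by
  ext y; simp only [prior, Finset.mem_filter, Finset.mem_univ, true_and, Finset.notMem_empty,
    iff_false, not_and]
  exact h y

lemma prior_single {ord : Fin 3 → ℕ} {x y0 : Fin 3}
    (h : ∀ y, (adj3 x y ∧ ord y < ord x) ↔ y = y0) : prior adj3 ord x = {y0} := by
  ext y; simp only [prior, Finset.mem_filter, Finset.mem_univ, true_and, Finset.mem_singleton]
  exact h y

lemma consistent_no_prior {P : Fin 3 → Finset (Fin 3)} {p1 : Fin 3 → Fin 3}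
    {ord : Fin 3 → ℕ} {f : Fin 3 → Fin 3} (hc : Consistent adj3 P p1 ord f) (x : Fin 3)
    (h : prior adj3 ord x = ∅) : f x = p1 x := by
  rcases hc x with ⟨c, _, hgt, _⟩ | ⟨_, hfx⟩
  · rw [h] at hgt; simp at hgt
  · exact hfx

lemma consistent_single {P : Fin 3 → Finset (Fin 3)} {p1 : Fin 3 → Fin 3}
    {ord : Fin 3 → ℕ} {f : Fin 3 → Fin 3} (hc : Consistent adj3 P p1 ord f) (x y0 : Fin 3)
    (h : prior adj3 ord x = {y0}) :
    (f y0 ∈ P x ∧ f x = f y0) ∨ (f y0 ∉ P x ∧ f x = p1 x) := by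
  rcases hc x with ⟨c, hcP, hgt, hfx⟩ | ⟨hno, hfx⟩
  · rw [h, Finset.filter_singleton] at hgt
    by_cases hy : f y0 = c
    · left; rw [hy]; exact ⟨hcP, hfx⟩
    · simp [hy] at hgt
  · right
    refine ⟨fun hmem => hno ⟨f y0, hmem, ?_⟩, hfx⟩
    rw [h, Finset.filter_singleton]
    simp

/-- Under the order `0 ≺ 1 ≺ 2` agent 2 votes `c`; under `1 ≺ 0 ≺ 2` agent 2 votes `b`;
and under every voting order agent 2 votes `b` or `c`. -/
theorem three_agents_path_votes :
    (∀ f : Fin 3 → Fin 3,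
      Consistent adj3 P3 p13 (fun x => (x : ℕ)) f → f 2 = 2) ∧
    (∀ f : Fin 3 → Fin 3,
      Consistent adj3 P3 p13 ![1, 0, 2] f → f 2 = 1) ∧
    (∀ (ord : Fin 3 → ℕ) (f : Fin 3 → Fin 3), Function.Injective ord →
      Consistent adj3 P3 p13 ord f → f 2 = 1 ∨ f 2 = 2) := by
  refine ⟨?_, ?_, ?_⟩
  · intro f h
    have e0 : prior adj3 (fun x : Fin 3 => (x : ℕ)) 0 = ∅ :=
      prior_empty (by intro y; fin_cases y <;> simp [adj3])
    have e1 : prior adj3 (fun x : Fin 3 => (x : ℕ)) 1 = {0} :=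
      prior_single (by intro y; fin_cases y <;> simp [adj3])
    have e2 : prior adj3 (fun x : Fin 3 => (x : ℕ)) 2 = {1} :=
      prior_single (by intro y; fin_cases y <;> simp [adj3])
    have hf0 : f 0 = 2 := consistent_no_prior h 0 e0
    have hf1 : f 1 = 2 := by
      rcases consistent_single h 1 0 e1 with ⟨_, hx⟩ | ⟨hmem, _⟩
      · rw [hx, hf0]
      · rw [hf0] at hmem; simp [P3] at hmem
    rcases consistent_single h 2 1 e2 with ⟨_, hx⟩ | ⟨hmem, _⟩
    · rw [hx, hf1]
    · rw [hf1] at hmem; simp [P3] at hmem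
  · intro f h
    have e0 : prior adj3 ![1, 0, 2] 0 = {1} := prior_single (by intro y; fin_cases y <;> simp [adj3])
    have e1 : prior adj3 ![1, 0, 2] 1 = ∅ := prior_empty (by intro y; fin_cases y <;> simp [adj3])
    have e2 : prior adj3 ![1, 0, 2] 2 = {1} := prior_single (by intro y; fin_cases y <;> simp [adj3])
    have hf1 : f 1 = 0 := by simpa [p13] using consistent_no_prior h 1 e1
    rcases consistent_single h 2 1 e2 with ⟨hmem, _⟩ | ⟨_, hx⟩
    · rw [hf1] at hmem; simp [P3] at hmem
    · simpa [p13] using hx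
  · intro ord f _ h
    rcases h 2 with ⟨c, hcP, _, hfc⟩ | ⟨_, hfc⟩
    · subst hfc
      simpa [P3] using hcP
    · left; simpa [p13] using hfc
end

section
/- The (3≤,3≤)-SAT instance φ is satisfiable if and only if candidate a is a possible co-winner in the social poll instance constructed from φ in which the social network graph is a disjoint union of paths of length at most 1 (i.e., a matching plus isolated vertices) and each agent has two preferred candidates. Hence the unweighted possible winner problem is NP-hard even on disjoint unions of edges and isolated vertices. -/
open scoped Classical
open Finset

/-! The SAT construction. The formula has `n` variables and `m` clauses; clause `j`
has `len j ∈ {2,3}` literals `lit j 0, …, lit j (len j - 1)` (a literal is a variable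
with a polarity). Candidates: one per literal, one per clause, a dummy `d` and the
distinguished candidate `a`. Agents: two adjacent var-agents per variable; six
clause-agents per clause (pairs of adjacent agents, one pair per literal of the
clause, the spare pair for 2-literal clauses being two isolated agents with
preferences `(c_j, d)`); three isolated agents with preferences `(l, d)` per literal
`l`; and five isolated agents with preferences `(a, d)`. The social network graph is
a disjoint union of paths of length at most 1. -/

abbrev C13 (n m : ℕ) := (Fin n × Bool) ⊕ (Fin m ⊕ Fin 2)

/-- The dummy candidate `d`. -/
def cd (n m : ℕ) : C13 n m := .inr (.inr 0)

/-- The distinguished candidate `a`. -/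
def ca (n m : ℕ) : C13 n m := .inr (.inr 1)

abbrev V13 (n m : ℕ) :=
  (Fin n × Fin 2) ⊕ ((Fin m × Fin 6) ⊕ (((Fin n × Bool) × Fin 3) ⊕ Fin 5))

def adj13 (n m : ℕ) (len : Fin m → ℕ) : V13 n m → V13 n m → Prop
  | .inl (i, s), .inl (i', s') => i = i' ∧ s ≠ s'
  | .inr (.inl (j, q)), .inr (.inl (j', q')) =>
      j = j' ∧ (q : ℕ) / 2 = (q' : ℕ) / 2 ∧ q ≠ q' ∧ (q : ℕ) / 2 < len j
  | _, _ => False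

noncomputable def P13 (n m : ℕ) (len : Fin m → ℕ) (lit : Fin m → Fin 3 → Fin n × Bool) :
    V13 n m → Finset (C13 n m)
  | .inl (i, _) => {.inl (i, true), .inl (i, false)}
  | .inr (.inl (j, q)) =>
      if (q : ℕ) / 2 < len j ∧ (q : ℕ) % 2 = 1 then
        {.inl (lit j ⟨(q : ℕ) / 2, by have := q.isLt; omega⟩), .inr (.inl j)}
      else {.inr (.inl j), cd n m}
  | .inr (.inr (.inl (l, _))) => {.inl l, cd n m}
  | .inr (.inr (.inr _)) => {ca n m, cd n m}

noncomputable def p113 (n m : ℕ) (len : Fin m → ℕ) (lit : Fin m → Fin 3 → Fin n × Bool) :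
    V13 n m → C13 n m
  | .inl (i, s) => if s = 0 then .inl (i, true) else .inl (i, false)
  | .inr (.inl (j, q)) =>
      if (q : ℕ) / 2 < len j ∧ (q : ℕ) % 2 = 1 then
        .inl (lit j ⟨(q : ℕ) / 2, by have := q.isLt; omega⟩)
      else .inr (.inl j)
  | .inr (.inr (.inl (l, _))) => .inl l
  | .inr (.inr (.inr _)) => ca n m

/-- Number of occurrences of the literal `(v, b)` in the formula. -/
noncomputable def occ13 (n m : ℕ) (len : Fin m → ℕ) (lit : Fin m → Fin 3 → Fin n × Bool)
    (v : Fin n) (b : Bool) : ℕ :=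
  ∑ j : Fin m, ((Finset.univ : Finset (Fin 3)).filter
    fun (p : Fin 3) => (p : ℕ) < len j ∧ lit j p = (v, b)).card

/-- Satisfiability of the formula. -/
def Satisfiable13 (n m : ℕ) (len : Fin m → ℕ) (lit : Fin m → Fin 3 → Fin n × Bool) : Prop :=
  ∃ σ : Fin n → Bool, ∀ j : Fin m, ∃ p : Fin 3,
    (p : ℕ) < len j ∧ (lit j p).2 = σ (lit j p).1

/-! An agent has at most one neighbour, so she votes her top choice unless that neighbour voted
before her for one of her two candidates, which she then copies. If every candidate scores at
most as much as `a`, which only its five agents can vote for, then no clause candidate `c_j` gets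
all six votes of its clause agents, so some agent of clause `j` votes a literal `l` of the clause.
Since `l` also gets its three isolated votes, the two variable agents of its variable, which vote
alike, vote the other literal; making every literal they vote for false satisfies the formula.
Conversely, given a satisfying assignment and one true literal `w j` of each clause, let the
following agents vote first: in each variable pair the one preferring the false literal, in the
pair of `w j` the literal agent, and in every other pair of clause `j` the `c_j`-agent. Then `a` gets five votes, `c_j` five, a false literal
five, and a true literal at most five, as it occurs at most twice. -/

section SocialPoll

variable {V C : Type*} [Fintype V] {adj : V → V → Prop} {P : V → Finset C} {p1 : V → C}
  {ord : V → ℕ} {f : V → C} {x y : V}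

def ConsistentAt (adj : V → V → Prop) (P : V → Finset C) (p1 : V → C) (ord : V → ℕ)
    (f : V → C) (x : V) : Prop :=
  (∃ c ∈ P x,
      (2 * (((prior adj ord x).filter fun y => f y = c).card) > (prior adj ord x).card)
      ∧ f x = c)
  ∨ ((¬ ∃ c ∈ P x,
        2 * (((prior adj ord x).filter fun y => f y = c).card) > (prior adj ord x).card)
      ∧ f x = p1 x)

theorem prior_eq_empty_of_isolated (h : ∀ y, ¬ adj x y) : prior adj ord x = ∅ := by
  simp [prior, h]

theorem prior_eq_singleton (hx : ∀ z, adj x z ↔ z = y) (hlt : ord y < ord x) :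
    prior adj ord x = {y} := by
  ext z
  simp only [prior, mem_filter, mem_univ, true_and, mem_singleton, hx]
  exact ⟨And.left, fun h => ⟨h, h ▸ hlt⟩⟩

theorem prior_eq_empty_of_adj_iff (hx : ∀ z, adj x z ↔ z = y) (hlt : ¬ ord y < ord x) :
    prior adj ord x = ∅ := by
  ext z
  simp only [prior, mem_filter, mem_univ, true_and, hx, notMem_empty, iff_false, not_and]
  rintro rfl
  exact hlt

theorem consistentAt_iff_of_prior_eq_empty (h : prior adj ord x = ∅) :
    ConsistentAt adj P p1 ord f x ↔ f x = p1 x := by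
  simp [ConsistentAt, h]

theorem consistentAt_iff_of_prior_eq_singleton (h : prior adj ord x = {y}) :
    ConsistentAt adj P p1 ord f x ↔ f x = if f y ∈ P x then f y else p1 x := by
  simp only [ConsistentAt, h, filter_singleton, card_singleton]
  split_ifs with hy
  · constructor
    · rintro (⟨c, -, hc, rfl⟩ | ⟨hno, -⟩)
      · by_contra hne
        simp [Ne.symm hne] at hc
      · exact absurd ⟨f y, hy, by simp⟩ hno
    · intro hx
      exact Or.inl ⟨f y, hy, by simp, hx⟩
  · constructor
    · rintro (⟨c, hc, hgt, rfl⟩ | ⟨-, hx⟩)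
      · by_cases hyc : f y = f x
        · exact absurd (hyc ▸ hc) hy
        · simp [hyc] at hgt
      · exact hx
    · intro hx
      refine Or.inr ⟨?_, hx⟩
      rintro ⟨c, hc, hgt⟩
      by_cases hyc : f y = c
      · exact hy (hyc ▸ hc)
      · simp [hyc] at hgt

theorem consistentAt_of_isolated (h : ∀ y, ¬ adj x y) (hf : f x = p1 x) :
    ConsistentAt adj P p1 ord f x :=
  (consistentAt_iff_of_prior_eq_empty (prior_eq_empty_of_isolated h)).2 hf

theorem Consistent.mem (hC : Consistent adj P p1 ord f) (hp1 : ∀ x, p1 x ∈ P x) (x : V) :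
    f x ∈ P x := by
  rcases hC x with ⟨c, hc, -, rfl⟩ | ⟨-, hx⟩
  · exact hc
  · exact hx ▸ hp1 x

theorem Consistent.eq_p1_or_exists_adj (hC : Consistent adj P p1 ord f) (x : V) :
    f x = p1 x ∨ ∃ y, adj x y ∧ f y = f x := by
  rcases hC x with ⟨c, -, hgt, rfl⟩ | ⟨-, hx⟩
  · obtain ⟨y, hy⟩ : ((prior adj ord x).filter fun y => f y = f x).Nonempty := by
      rw [← card_pos]; omega
    simp only [prior, mem_filter, mem_univ, true_and] at hy
    exact Or.inr ⟨y, hy.1.1, hy.2⟩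
  · exact Or.inl hx

theorem Consistent.eq_of_adj_iff (hC : Consistent adj P p1 ord f) (hord : ord x ≠ ord y)
    (hx : ∀ z, adj x z ↔ z = y) (hy : ∀ z, adj y z ↔ z = x) (hxy : f x ∈ P y)
    (hyx : f y ∈ P x) : f x = f y := by
  rcases hord.lt_or_gt with hlt | hlt
  · have := (consistentAt_iff_of_prior_eq_singleton (prior_eq_singleton hy hlt)).1 (hC y)
    rw [if_pos hxy] at this
    exact this.symm
  · have := (consistentAt_iff_of_prior_eq_singleton (prior_eq_singleton hx hlt)).1 (hC x)
    rwa [if_pos hyx] at this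

noncomputable def twoRoundOrder (early : V → Prop) (x : V) : ℕ :=
  if early x then Fintype.equivFin V x else Fintype.card V + Fintype.equivFin V x

theorem twoRoundOrder_injective (early : V → Prop) :
    Function.Injective (twoRoundOrder early) := by
  intro x y h
  have hx := (Fintype.equivFin V x).isLt
  have hy := (Fintype.equivFin V y).isLt
  have : Fintype.equivFin V x = Fintype.equivFin V y := by
    ext
    unfold twoRoundOrder at h
    split_ifs at h <;> omega
  exact (Fintype.equivFin V).injective this

theorem twoRoundOrder_lt {early : V → Prop} (hx : early x) (hy : ¬ early y) :
    twoRoundOrder early x < twoRoundOrder early y := by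
  have := (Fintype.equivFin V x).isLt
  simp only [twoRoundOrder, if_pos hx, if_neg hy]
  omega

theorem consistentAt_twoRoundOrder_of_adj_iff {early : V → Prop} (hx : ∀ z, adj x z ↔ z = y)
    (hearly : early x ↔ ¬ early y)
    (hf : f x = if ¬ early x ∧ f y ∈ P x then f y else p1 x) :
    ConsistentAt adj P p1 (twoRoundOrder early) f x := by
  by_cases hxe : early x
  · rw [consistentAt_iff_of_prior_eq_empty (prior_eq_empty_of_adj_iff hx
      (twoRoundOrder_lt hxe (hearly.1 hxe)).not_gt)]
    simpa [hxe] using hf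
  · rw [consistentAt_iff_of_prior_eq_singleton (prior_eq_singleton hx
      (twoRoundOrder_lt (not_not.1 (mt hearly.2 hxe)) hxe))]
    simpa [hxe] using hf

theorem score_sum {α β : Type*} [Fintype α] [Fintype β] (f : α ⊕ β → C) (c : C) :
    score f c = score (f ∘ Sum.inl) c + score (f ∘ Sum.inr) c := by
  simp only [score, card_filter, Fintype.sum_sum_type, Function.comp_apply]

theorem score_eq_zero (h : ∀ x, f x ≠ c) : score f c = 0 := by
  simp [score, h]

theorem score_le_card (c : C) : score f c ≤ Fintype.card V :=
  card_filter_le _ _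

theorem score_le_card_of_forall_mem {c : C} (S : Finset V) (h : ∀ x, f x = c → x ∈ S) :
    score f c ≤ #S :=
  card_le_card fun x hx => h x (mem_filter.1 hx).2

theorem card_le_score_of_injective {ι : Type*} [Fintype ι] {c : C} (g : ι → V)
    (hg : Function.Injective g) (h : ∀ i, f (g i) = c) : Fintype.card ι ≤ score f c := by
  rw [← card_univ, ← card_map ⟨g, hg⟩]
  exact card_le_card fun x hx => by
    obtain ⟨i, -, rfl⟩ := mem_map.1 hx
    simpa [score] using h i

theorem score_pos (h : f x = c) : 0 < score f c :=
  card_pos.2 ⟨x, by simp [h]⟩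

end SocialPoll

section Construction

variable {n m : ℕ} {len : Fin m → ℕ} {lit : Fin m → Fin 3 → Fin n × Bool}

/-- Agents `2p` and `2p + 1` of clause `j` form the pair of its `p`-th literal; agent `2p + 1`
prefers that literal. -/
def clauseIndex (p : Fin 3) (r : Fin 2) : Fin 6 :=
  ⟨2 * p + r, by omega⟩

theorem clauseIndex_inj {p p' : Fin 3} {r r' : Fin 2} :
    clauseIndex p r = clauseIndex p' r' ↔ p = p' ∧ r = r' := by
  simp only [clauseIndex, Fin.ext_iff]
  omega

theorem exists_clauseIndex_eq (q : Fin 6) : ∃ p r, clauseIndex p r = q :=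
  ⟨⟨q / 2, by omega⟩, ⟨q % 2, by omega⟩, Fin.ext (by simp only [clauseIndex]; omega)⟩

theorem p113_clause (j : Fin m) (p : Fin 3) (r : Fin 2) :
    p113 n m len lit (.inr (.inl (j, clauseIndex p r))) =
      if p < len j ∧ r = 1 then .inl (lit j p) else .inr (.inl j) := by
  have hdiv : (2 * (p : ℕ) + r) / 2 = p := by omega
  have hmod : (2 * (p : ℕ) + r) % 2 = r := by omega
  simp [clauseIndex, p113, hdiv, hmod, Fin.ext_iff]

theorem P13_clause (j : Fin m) (p : Fin 3) (r : Fin 2) :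
    P13 n m len lit (.inr (.inl (j, clauseIndex p r))) =
      if p < len j ∧ r = 1 then {.inl (lit j p), .inr (.inl j)} else {.inr (.inl j), cd n m} := by
  have hdiv : (2 * (p : ℕ) + r) / 2 = p := by omega
  have hmod : (2 * (p : ℕ) + r) % 2 = r := by omega
  simp [clauseIndex, P13, hdiv, hmod, Fin.ext_iff]

theorem adj13_clause_iff (j : Fin m) (p : Fin 3) (r : Fin 2) (z : V13 n m) :
    adj13 n m len (.inr (.inl (j, clauseIndex p r))) z ↔
      (p : ℕ) < len j ∧ z = .inr (.inl (j, clauseIndex p r.rev)) := by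
  rcases z with z | ⟨j', q'⟩ | z
  · simp [adj13]
  · obtain ⟨p', r', rfl⟩ := exists_clauseIndex_eq q'
    simp only [adj13, clauseIndex, Fin.ext_iff, Fin.val_rev, ne_eq, Sum.inr.injEq,
      Sum.inl.injEq, Prod.mk.injEq]
    omega
  · simp [adj13]

theorem adj13_var_iff (i : Fin n) (s : Fin 2) (z : V13 n m) :
    adj13 n m len (.inl (i, s)) z ↔ z = .inl (i, s.rev) := by
  rcases z with ⟨i', s'⟩ | z
  · simp only [adj13, Sum.inl.injEq, Prod.mk.injEq]
    fin_cases s <;> fin_cases s' <;> simp [eq_comm]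
  · simp [adj13]

theorem not_adj13_inr_inr (x : ((Fin n × Bool) × Fin 3) ⊕ Fin 5) (z : V13 n m) :
    ¬ adj13 n m len (.inr (.inr x)) z := by
  rcases z with z | z | z <;> simp [adj13]

theorem p113_mem_P13 (x : V13 n m) : p113 n m len lit x ∈ P13 n m len lit x := by
  rcases x with ⟨i, s⟩ | ⟨j, q⟩ | ⟨l, t⟩ | k <;> simp only [p113, P13]
  · split_ifs <;> simp
  · split_ifs <;> simp
  · simp
  · simp

theorem score_V13 {C : Type*} (f : V13 n m → C) (c : C) :
    score f c =
      score (fun x => f (.inl x)) c + score (fun x => f (.inr (.inl x))) c +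
        score (fun x => f (.inr (.inr (.inl x)))) c +
        score (fun x => f (.inr (.inr (.inr x)))) c := by
  rw [score_sum, score_sum (f ∘ .inr), score_sum ((f ∘ .inr) ∘ .inr)]
  simp only [add_assoc]
  rfl

end Construction

section Forward

variable {n m : ℕ} {len : Fin m → ℕ} {lit : Fin m → Fin 3 → Fin n × Bool}
  (σ : Fin n → Bool) (w : Fin m → Fin 3)

def satEarly : V13 n m → Prop
  | .inl (i, s) => s = if σ i then 1 else 0
  | .inr (.inl (j, q)) => ∃ p r, q = clauseIndex p r ∧ (r = 1 ↔ p = w j)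
  | .inr (.inr _) => True

def satVote (lit : Fin m → Fin 3 → Fin n × Bool) : V13 n m → C13 n m
  | .inl (i, _) => .inl (i, !σ i)
  | .inr (.inl (j, q)) => if q = clauseIndex (w j) 1 then .inl (lit j (w j)) else .inr (.inl j)
  | .inr (.inr (.inl (l, _))) => .inl l
  | .inr (.inr (.inr _)) => ca n m

theorem consistent_satVote (hw : ∀ j, (w j : ℕ) < len j) :
    Consistent (adj13 n m len) (P13 n m len lit) (p113 n m len lit)
      (twoRoundOrder (satEarly σ w)) (satVote σ w lit) := by
  rintro (⟨i, s⟩ | ⟨j, q⟩ | ⟨l, t⟩ | k)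
  · refine consistentAt_twoRoundOrder_of_adj_iff (adj13_var_iff i s) ?_ ?_ <;>
      cases σ i <;> fin_cases s <;> simp [satEarly, satVote, p113, P13]
  · obtain ⟨p, r, rfl⟩ := exists_clauseIndex_eq q
    by_cases hp : (p : ℕ) < len j
    · refine consistentAt_twoRoundOrder_of_adj_iff
        (fun z => (adj13_clause_iff j p r z).trans (and_iff_right hp)) ?_ ?_
      · fin_cases r <;> simp [satEarly, clauseIndex_inj]
      · rcases eq_or_ne p (w j) with rfl | hpw <;> fin_cases r <;>
          simp_all [satEarly, satVote, clauseIndex_inj, P13_clause, p113_clause, cd]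
    · refine consistentAt_of_isolated (fun z h => hp ((adj13_clause_iff j p r z).1 h).1) ?_
      have := hw j
      have hpw : p ≠ w j := by rintro rfl; omega
      simp [satVote, p113_clause, hp, clauseIndex_inj, hpw]
  · exact consistentAt_of_isolated (not_adj13_inr_inr _) rfl
  · exact consistentAt_of_isolated (not_adj13_inr_inr _) rfl

theorem five_le_score_satVote_ca : 5 ≤ score (satVote σ w lit) (ca n m) := by
  have := card_le_score_of_injective (f := fun k => satVote σ w lit (.inr (.inr (.inr k))))
    (c := ca n m) id Function.injective_id fun _ => rfl
  rw [Fintype.card_fin] at this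
  rw [score_V13]
  omega

theorem score_satVote_cd : score (satVote σ w lit) (cd n m) = 0 :=
  score_eq_zero <| by
    rintro (⟨i, s⟩ | ⟨j, q⟩ | ⟨l, t⟩ | k) <;> simp only [satVote] <;> try split_ifs
    all_goals simp [cd, ca]

theorem score_satVote_clause_le (j₀ : Fin m) :
    score (satVote σ w lit) (.inr (.inl j₀)) ≤ 5 := by
  have hclause := score_le_card_of_forall_mem
    (f := fun x => satVote σ w lit (.inr (.inl x))) (c := .inr (.inl j₀))
    ({j₀} ×ˢ univ.erase (clauseIndex (w j₀) 1)) <| by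
      rintro ⟨j, q⟩ h
      simp only [satVote] at h
      split_ifs at h with hq
      obtain rfl : j = j₀ := by simpa using h
      simpa using hq
  have hvar : score (fun x => satVote σ w lit (.inl x)) (.inr (.inl j₀)) = 0 :=
    score_eq_zero fun _ => by simp [satVote]
  have hlit : score (fun x => satVote σ w lit (.inr (.inr (.inl x)))) (.inr (.inl j₀)) = 0 :=
    score_eq_zero fun _ => by simp [satVote]
  have ha : score (fun x => satVote σ w lit (.inr (.inr (.inr x)))) (.inr (.inl j₀)) = 0 :=
    score_eq_zero fun _ => by simp [satVote, ca]
  simp only [card_product, card_singleton, card_erase_of_mem (mem_univ _), card_univ,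
    Fintype.card_fin] at hclause
  rw [score_V13]
  omega

theorem card_filter_witness_le_occ13 (hw : ∀ j, (w j : ℕ) < len j) (v : Fin n) (b : Bool) :
    #{j | lit j (w j) = (v, b)} ≤ occ13 n m len lit v b := by
  rw [card_filter, occ13]
  refine sum_le_sum fun j _ => ?_
  split_ifs with hj
  · exact card_pos.2 ⟨w j, by simp [hw j, hj]⟩
  · exact Nat.zero_le _

theorem score_satVote_lit_le (l : Fin n × Bool) :
    score (satVote σ w lit) (.inl l) ≤ score (fun x => satVote σ w lit (.inl x)) (.inl l) +
      score (fun x => satVote σ w lit (.inr (.inl x))) (.inl l) + 3 := by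
  have hlit := score_le_card_of_forall_mem
    (f := fun x => satVote σ w lit (.inr (.inr (.inl x)))) (c := .inl l)
    ({l} ×ˢ univ) fun ⟨l', t⟩ h => by simp_all [satVote]
  have ha : score (fun x => satVote σ w lit (.inr (.inr (.inr x)))) (.inl l) = 0 :=
    score_eq_zero fun _ => by simp [satVote, ca]
  simp only [card_product, card_singleton, card_univ, Fintype.card_fin] at hlit
  rw [score_V13]
  omega

theorem score_satVote_true_lit_le (hw : ∀ j, (w j : ℕ) < len j) (v : Fin n)
    (hocc : occ13 n m len lit v (σ v) ≤ 2) :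
    score (satVote σ w lit) (.inl (v, σ v)) ≤ 5 := by
  have hvar : score (fun x => satVote σ w lit (.inl x)) (.inl (v, σ v)) = 0 :=
    score_eq_zero fun ⟨i, s⟩ h => by
      obtain ⟨rfl, hσ⟩ : i = v ∧ (!σ i) = σ v := by simpa [satVote] using h
      simp at hσ
  have hclause : score (fun x => satVote σ w lit (.inr (.inl x))) (.inl (v, σ v)) ≤ 2 := by
    refine (score_le_card_of_forall_mem
      (image (fun j => ((j, clauseIndex (w j) 1) : Fin m × Fin 6)) {j | lit j (w j) = (v, σ v)})
      ?_).trans (card_image_le.trans ((card_filter_witness_le_occ13 w hw v _).trans hocc))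
    rintro ⟨j, q⟩ h
    simp only [satVote] at h
    split_ifs at h with hq
    subst hq
    exact mem_image_of_mem _ (by simpa using h)
  have := score_satVote_lit_le σ w (lit := lit) (v, σ v)
  omega

theorem score_satVote_false_lit_le (htrue : ∀ j, (lit j (w j)).2 = σ (lit j (w j)).1)
    (v : Fin n) : score (satVote σ w lit) (.inl (v, !σ v)) ≤ 5 := by
  have hvar := score_le_card_of_forall_mem
    (f := fun x => satVote σ w lit (.inl x)) (c := .inl (v, !σ v)) ({v} ×ˢ univ) <| by
      rintro ⟨i, s⟩ h
      simp_all [satVote]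
  have hclause : score (fun x => satVote σ w lit (.inr (.inl x))) (.inl (v, !σ v)) = 0 := by
    refine score_eq_zero ?_
    rintro ⟨j, q⟩ h
    simp only [satVote] at h
    split_ifs at h
    simp only [Sum.inl.injEq] at h
    simpa [h] using htrue j
  simp only [card_product, card_singleton, card_univ, Fintype.card_fin] at hvar
  have := score_satVote_lit_le σ w (lit := lit) (v, !σ v)
  omega

end Forward

theorem exists_winning_order_of_satisfiable {n m : ℕ} {len : Fin m → ℕ}
    {lit : Fin m → Fin 3 → Fin n × Bool} (hocc : ∀ v b, occ13 n m len lit v b ≤ 2)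
    (hsat : Satisfiable13 n m len lit) :
    ∃ (ord : V13 n m → ℕ) (f : V13 n m → C13 n m), Function.Injective ord ∧
      Consistent (adj13 n m len) (P13 n m len lit) (p113 n m len lit) ord f ∧
      ∀ c : C13 n m, score f c ≤ score f (ca n m) := by
  obtain ⟨σ, hσ⟩ := hsat
  choose w hw htrue using hσ
  refine ⟨_, _, twoRoundOrder_injective _, consistent_satVote σ w hw, fun c => ?_⟩
  have h5 := five_le_score_satVote_ca σ w (lit := lit)
  rcases c with ⟨v, b⟩ | j | r
  · obtain rfl | rfl : b = σ v ∨ b = !σ v := by cases b <;> cases σ v <;> simp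
    · exact (score_satVote_true_lit_le σ w hw v (hocc v _)).trans h5
    · exact (score_satVote_false_lit_le σ w htrue v).trans h5
  · exact (score_satVote_clause_le σ w j).trans h5
  · fin_cases r
    · exact (score_satVote_cd σ w).trans_le (Nat.zero_le _)
    · exact le_rfl

section Backward

variable {n m : ℕ} {len : Fin m → ℕ} {lit : Fin m → Fin 3 → Fin n × Bool}
  {ord : V13 n m → ℕ} {f : V13 n m → C13 n m}

theorem score_ca_le_five
    (hC : Consistent (adj13 n m len) (P13 n m len lit) (p113 n m len lit) ord f) :
    score f (ca n m) ≤ 5 := by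
  have hmem := hC.mem p113_mem_P13
  have hvar : score (fun x => f (.inl x)) (ca n m) = 0 := score_eq_zero fun ⟨i, s⟩ h => by
    simpa [P13, h, ca] using hmem (.inl (i, s))
  have hclause : score (fun x => f (.inr (.inl x))) (ca n m) = 0 :=
    score_eq_zero fun ⟨j, q⟩ h => by
      obtain ⟨p, r, rfl⟩ := exists_clauseIndex_eq q
      have := hmem (.inr (.inl (j, clauseIndex p r)))
      rw [P13_clause, h] at this
      split_ifs at this <;> simp [ca, cd] at this
  have hlit : score (fun x => f (.inr (.inr (.inl x)))) (ca n m) = 0 :=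
    score_eq_zero fun ⟨l, t⟩ h => by
      simpa [P13, h, ca, cd] using hmem (.inr (.inr (.inl (l, t))))
  have ha := score_le_card (f := fun x => f (.inr (.inr (.inr x)))) (ca n m)
  rw [Fintype.card_fin] at ha
  rw [score_V13]
  omega

theorem vote_lit_agent
    (hC : Consistent (adj13 n m len) (P13 n m len lit) (p113 n m len lit) ord f)
    (l : Fin n × Bool) (t : Fin 3) : f (.inr (.inr (.inl (l, t)))) = .inl l := by
  rcases hC.eq_p1_or_exists_adj (.inr (.inr (.inl (l, t)))) with h | ⟨y, hy, -⟩
  · exact h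
  · exact absurd hy (not_adj13_inr_inr _ y)

theorem exists_vote_var_agents (hinj : Function.Injective ord)
    (hC : Consistent (adj13 n m len) (P13 n m len lit) (p113 n m len lit) ord f) (v : Fin n) :
    ∃ b, ∀ s, f (.inl (v, s)) = .inl (v, b) := by
  have hmem := hC.mem p113_mem_P13
  have heq : f (.inl (v, 0)) = f (.inl (v, 1)) :=
    hC.eq_of_adj_iff (hinj.ne (by simp)) (adj13_var_iff v 0) (adj13_var_iff v 1)
      (by simpa [P13] using hmem (.inl (v, 0))) (by simpa [P13] using hmem (.inl (v, 1)))
  obtain ⟨b, hb⟩ : ∃ b, f (.inl (v, 0)) = .inl (v, b) := by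
    rcases (by simpa [P13] using hmem (.inl (v, 0)) :
      f (.inl (v, 0)) = .inl (v, true) ∨ f (.inl (v, 0)) = .inl (v, false)) with h | h
    exacts [⟨_, h⟩, ⟨_, h⟩]
  exact ⟨b, fun s => by fin_cases s <;> simp [← heq, hb]⟩

theorem vote_clause_agent_eq_or
    (hC : Consistent (adj13 n m len) (P13 n m len lit) (p113 n m len lit) ord f)
    (j : Fin m) (p : Fin 3) (r : Fin 2) :
    f (.inr (.inl (j, clauseIndex p r))) = .inr (.inl j) ∨
      ((p : ℕ) < len j ∧ r = 1 ∧ f (.inr (.inl (j, clauseIndex p r))) = .inl (lit j p)) := by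
  have hmem := hC.mem p113_mem_P13
  have hx := hmem (.inr (.inl (j, clauseIndex p r)))
  rw [P13_clause] at hx
  split_ifs at hx with hlit
  · simp only [mem_insert, mem_singleton] at hx
    exact hx.symm.imp_right fun h => ⟨hlit.1, hlit.2, h⟩
  · simp only [mem_insert, mem_singleton] at hx
    refine Or.inl (hx.resolve_right fun hd => ?_)
    rcases hC.eq_p1_or_exists_adj (.inr (.inl (j, clauseIndex p r))) with h | ⟨y, hy, hfy⟩
    · simp [h, p113_clause, hlit, cd] at hd
    · obtain ⟨hp, rfl⟩ := (adj13_clause_iff j p r y).1 hy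
      have hy := hmem (.inr (.inl (j, clauseIndex p r.rev)))
      have hr : r.rev = 1 := by
        have : r ≠ 1 := fun h => hlit ⟨hp, h⟩
        fin_cases r <;> simp_all
      rw [P13_clause, if_pos ⟨hp, hr⟩, hfy, hd] at hy
      simp [cd] at hy

theorem exists_vote_lit_of_score_le_five
    (hC : Consistent (adj13 n m len) (P13 n m len lit) (p113 n m len lit) ord f)
    (j : Fin m) (h5 : score f (.inr (.inl j)) ≤ 5) :
    ∃ p : Fin 3, (p : ℕ) < len j ∧ f (.inr (.inl (j, clauseIndex p 1))) = .inl (lit j p) := by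
  by_contra! hno
  have h6 := card_le_score_of_injective (f := f) (c := .inr (.inl j))
    (fun pr : Fin 3 × Fin 2 => .inr (.inl (j, clauseIndex pr.1 pr.2)))
    (fun a b hab => by simpa [clauseIndex_inj, Prod.ext_iff] using hab)
    fun ⟨p, r⟩ => (vote_clause_agent_eq_or hC j p r).resolve_right
      fun ⟨hp, hr, hv⟩ => hno p hp (hr ▸ hv)
  simp only [Fintype.card_prod, Fintype.card_fin] at h6
  omega

theorem six_le_score_of_votes {v : Fin n} {b : Bool} (hvar : ∀ s, f (.inl (v, s)) = .inl (v, b))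
    (hlit : ∀ t, f (.inr (.inr (.inl ((v, b), t)))) = .inl (v, b)) {x : Fin m × Fin 6}
    (hx : f (.inr (.inl x)) = .inl (v, b)) : 6 ≤ score f (.inl (v, b)) := by
  have h2 := card_le_score_of_injective (f := fun x => f (.inl x)) (fun s => (v, s))
    (Prod.mk_right_injective v) hvar
  have h1 := score_pos (f := fun x => f (.inr (.inl x))) hx
  have h3 := card_le_score_of_injective (f := fun x => f (.inr (.inr (.inl x))))
    (fun t => ((v, b), t)) (Prod.mk_right_injective (v, b)) hlit
  simp only [Fintype.card_fin] at h2 h3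
  rw [score_V13]
  omega

theorem satisfiable_of_winning_order (hinj : Function.Injective ord)
    (hC : Consistent (adj13 n m len) (P13 n m len lit) (p113 n m len lit) ord f)
    (hwin : ∀ c, score f c ≤ score f (ca n m)) : Satisfiable13 n m len lit := by
  have h5 c : score f c ≤ 5 := (hwin c).trans (score_ca_le_five hC)
  choose b hb using exists_vote_var_agents hinj hC
  refine ⟨fun v => !b v, fun j => ?_⟩
  obtain ⟨p, hp, hvote⟩ := exists_vote_lit_of_score_le_five hC j (h5 _)
  refine ⟨p, hp, ?_⟩
  rcases hl : lit j p with ⟨v, c⟩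
  rw [hl] at hvote
  refine Bool.eq_not_iff.2 fun (hc : c = b v) => ?_
  subst hc
  have := six_le_score_of_votes (hb v) (vote_lit_agent hC _) hvote
  have := h5 (.inl (v, b v))
  omega

end Backward

theorem sat_iff_possible_winner_general
    (n m : ℕ) (len : Fin m → ℕ) (lit : Fin m → Fin 3 → Fin n × Bool)
    (hocc : ∀ v : Fin n,
      (occ13 n m len lit v true = 2 ∧ occ13 n m len lit v false = 1) ∨
      (occ13 n m len lit v true = 1 ∧ occ13 n m len lit v false = 2)) :
    Satisfiable13 n m len lit ↔
    (∃ (ord : V13 n m → ℕ) (f : V13 n m → C13 n m),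
      Function.Injective ord ∧
      Consistent (adj13 n m len) (P13 n m len lit) (p113 n m len lit) ord f ∧
      ∀ c : C13 n m, score f c ≤ score f (ca n m)) := by
  refine ⟨exists_winning_order_of_satisfiable fun v b => ?_, ?_⟩
  · rcases hocc v with h | h <;> cases b <;> omega
  · rintro ⟨ord, f, hinj, hC, hwin⟩
    exact satisfiable_of_winning_order hinj hC hwin

/-- The `(3≤,3≤)`-SAT instance is satisfiable iff the distinguished candidate `a` is a
possible co-winner of the constructed social poll instance, whose social network graph
is a disjoint union of paths of length at most 1 and where every agent has two
preferred candidates. Hence the unweighted possible winner problem is NP-hard even on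
disjoint unions of edges and isolated vertices. -/
theorem sat_iff_possible_winner
    (n m : ℕ) (len : Fin m → ℕ) (lit : Fin m → Fin 3 → Fin n × Bool)
    (hlen : ∀ j, len j = 2 ∨ len j = 3)
    (hocc : ∀ v : Fin n,
      (occ13 n m len lit v true = 2 ∧ occ13 n m len lit v false = 1) ∨
      (occ13 n m len lit v true = 1 ∧ occ13 n m len lit v false = 2)) :
    Satisfiable13 n m len lit ↔
    (∃ (ord : V13 n m → ℕ) (f : V13 n m → C13 n m),
      Function.Injective ord ∧
      Consistent (adj13 n m len) (P13 n m len lit) (p113 n m len lit) ord f ∧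
      ∀ c : C13 n m, score f c ≤ score f (ca n m)) :=
  sat_iff_possible_winner_general n m len lit hocc
end
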